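/- arXiv:1404.3964 — 5 statements merged into one kernel-verified Lean document; each statement's English description precedes it below -/
import Mathlib

section
/- (Generalized Jensen's inequality) Let 0 < α ≤ 1, let a < b be real numbers, and let f : ℝ → ℝ be generalized α-convex on [a, b]. Then for any n ≥ 1, any points x₁, …, xₙ ∈ [a, b] and any weights λ₁, …, λₙ ∈ [0, 1] with λ₁ + ⋯ + λₙ = 1, one has f(Σᵢ λᵢ xᵢ) ≤ Σᵢ λᵢ^α · f(xᵢ). -/
/-- A function `f : ℝ → ℝ` is generalized `α`-convex on `I` if for all `x₁ x₂ ∈ I`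
and `λ ∈ [0,1]`, `f (λ x₁ + (1-λ) x₂) ≤ λ^α * f x₁ + (1-λ)^α * f x₂`,
where powers are real powers (rpow). -/
def GeneralizedConvexOn (α : ℝ) (I : Set ℝ) (f : ℝ → ℝ) : Prop :=
  ∀ x₁ ∈ I, ∀ x₂ ∈ I, ∀ l ∈ Set.Icc (0:ℝ) 1,
    f (l * x₁ + (1 - l) * x₂) ≤ l ^ α * f x₁ + (1 - l) ^ α * f x₂

theorem jensen_aux (α : ℝ) (hα : 0 < α) (a b : ℝ)
    (f : ℝ → ℝ) (hf : GeneralizedConvexOn α (Set.Icc a b) f) :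
    ∀ n (x lam : Fin n → ℝ), (∀ i, x i ∈ Set.Icc a b) → (∀ i, 0 ≤ lam i) →
      ∑ i, lam i = 1 → f (∑ i, lam i * x i) ≤ ∑ i, lam i ^ α * f (x i) := by
  intro n
  induction n with
  | zero => intro x lam _ _ hsum; simp at hsum
  | succ n ih =>
    intro x lam hx hlam hsum
    set l := lam (Fin.last n) with hl
    set s := ∑ i : Fin n, lam i.castSucc with hs
    have hsl : s + l = 1 := by
      rw [hs, hl, ← Fin.sum_univ_castSucc]; exact hsum
    have hs0 : 0 ≤ s := Finset.sum_nonneg fun i _ => hlam _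
    have hl0 : 0 ≤ l := hlam _
    have hl1 : l ≤ 1 := by linarith
    rcases eq_or_lt_of_le hs0 with h0 | hspos
    · have hzero : ∀ i : Fin n, lam i.castSucc = 0 := by
        intro i
        have := (Finset.sum_eq_zero_iff_of_nonneg
          (fun i _ => hlam (Fin.castSucc i))).mp h0.symm
        exact this i (Finset.mem_univ i)
      have hl1' : l = 1 := by linarith
      rw [Fin.sum_univ_castSucc, Fin.sum_univ_castSucc]
      simp only [hzero, zero_mul, Finset.sum_const_zero, zero_add,
        Real.zero_rpow hα.ne']
      rw [show lam (Fin.last n) = 1 from hl1', one_mul, Real.one_rpow, one_mul]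
    · set μ : Fin n → ℝ := fun i => lam i.castSucc / s with hμ
      have hμ0 : ∀ i, 0 ≤ μ i := fun i => div_nonneg (hlam _) hs0
      have hμsum : ∑ i, μ i = 1 := by
        simp only [hμ, ← Finset.sum_div]
        exact div_self hspos.ne'
      set y := ∑ i, μ i * x i.castSucc with hy
      have hymem : y ∈ Set.Icc a b := by
        have := (convex_Icc a b).sum_mem (t := Finset.univ)
          (fun i _ => hμ0 i) hμsum (fun i _ => hx (Fin.castSucc i))
        simpa [smul_eq_mul, hy] using this
      have ihy := ih (fun i => x i.castSucc) μ (fun i => hx _) hμ0 hμsum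
      have key := hf (x (Fin.last n)) (hx _) y hymem l ⟨hl0, hl1⟩
      have hsy : 1 - l = s := by linarith
      rw [hsy] at key
      have hsum_eq : ∑ i, lam i * x i = l * x (Fin.last n) + s * y := by
        rw [Fin.sum_univ_castSucc, hy, Finset.mul_sum, add_comm]
        congr 1
        apply Finset.sum_congr rfl
        intro i _
        rw [hμ]
        field_simp
      rw [hsum_eq, Fin.sum_univ_castSucc]
      have step2 : s ^ α * f y ≤ ∑ i : Fin n, lam i.castSucc ^ α * f (x i.castSucc) := by
        calc s ^ α * f y ≤ s ^ α * ∑ i, μ i ^ α * f (x i.castSucc) :=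
              mul_le_mul_of_nonneg_left ihy (Real.rpow_nonneg hs0 α)
          _ = ∑ i : Fin n, lam i.castSucc ^ α * f (x i.castSucc) := by
              rw [Finset.mul_sum]
              apply Finset.sum_congr rfl
              intro i _
              rw [← mul_assoc, ← Real.mul_rpow hs0 (hμ0 i), hμ,
                mul_div_cancel₀ _ hspos.ne']
      calc f (l * x (Fin.last n) + s * y) ≤ l ^ α * f (x (Fin.last n)) + s ^ α * f y := key
        _ ≤ l ^ α * f (x (Fin.last n)) + ∑ i : Fin n, lam i.castSucc ^ α * f (x i.castSucc) := by
            linarith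
        _ = (∑ i : Fin n, lam i.castSucc ^ α * f (x i.castSucc)) + l ^ α * f (x (Fin.last n)) := by
            ring

/-- Generalized Jensen's inequality. -/
theorem stmt_3 (α : ℝ) (hα : 0 < α) (hα1 : α ≤ 1) (a b : ℝ) (hab : a < b)
    (f : ℝ → ℝ) (hf : GeneralizedConvexOn α (Set.Icc a b) f)
    (n : ℕ) (hn : 1 ≤ n) (x : Fin n → ℝ) (hx : ∀ i, x i ∈ Set.Icc a b)
    (lam : Fin n → ℝ) (hlam : ∀ i, lam i ∈ Set.Icc (0:ℝ) 1)
    (hsum : ∑ i, lam i = 1) :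
    f (∑ i, lam i * x i) ≤ ∑ i, lam i ^ α * f (x i) := by
  exact jensen_aux α hα a b f hf n x lam hx (fun i => (hlam i).1) hsum
end

section
/- Let 0 < α ≤ 1 and p > 1. Then the function f(x) = x^(αp) (real power) is generalized strictly α-convex on [0, ∞); that is, for all x₁, x₂ ≥ 0 with x₁ ≠ x₂ and all λ ∈ (0, 1), (λx₁ + (1−λ)x₂)^(αp) < λ^α · x₁^(αp) + (1−λ)^α · x₂^(αp). -/
lemma aux_rpow_add_le (a b α : ℝ) (ha : 0 ≤ a) (hb : 0 ≤ b) (h0 : 0 ≤ α) (h1 : α ≤ 1) :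
    (a + b) ^ α ≤ a ^ α + b ^ α := by
  lift a to NNReal using ha
  lift b to NNReal using hb
  have := NNReal.rpow_add_le_add_rpow a b h0 h1
  exact_mod_cast this

/-- `x ↦ x^(αp)` is generalized strictly `α`-convex on `[0, ∞)`. -/
theorem stmt_7 (α p : ℝ) (hα : 0 < α) (hα1 : α ≤ 1) (hp : 1 < p) :
    ∀ x₁ x₂ : ℝ, 0 ≤ x₁ → 0 ≤ x₂ → x₁ ≠ x₂ → ∀ l ∈ Set.Ioo (0:ℝ) 1,
      (l * x₁ + (1 - l) * x₂) ^ (α * p) <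
        l ^ α * x₁ ^ (α * p) + (1 - l) ^ α * x₂ ^ (α * p) := by
  intro x₁ x₂ hx₁ hx₂ hne l hl
  obtain ⟨hl0, hl1⟩ := hl
  have hl1' : 0 < 1 - l := by linarith
  have hconv := (strictConvexOn_rpow hp).2 hx₁ hx₂ hne hl0 hl1' (by ring)
  simp only [smul_eq_mul] at hconv
  have hs : 0 ≤ l * x₁ + (1 - l) * x₂ := by positivity
  have key : (l * x₁ + (1 - l) * x₂) ^ (α * p)
      < (l * x₁ ^ p + (1 - l) * x₂ ^ p) ^ α := by
    rw [mul_comm α p, Real.rpow_mul hs]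
    exact Real.rpow_lt_rpow (Real.rpow_nonneg hs p) hconv hα
  refine key.trans_le ?_
  have h1 : 0 ≤ l * x₁ ^ p := by positivity
  have h2 : 0 ≤ (1 - l) * x₂ ^ p := by positivity
  calc (l * x₁ ^ p + (1 - l) * x₂ ^ p) ^ α
      ≤ (l * x₁ ^ p) ^ α + ((1 - l) * x₂ ^ p) ^ α :=
        aux_rpow_add_le _ _ _ h1 h2 hα.le hα1
    _ = l ^ α * x₁ ^ (α * p) + (1 - l) ^ α * x₂ ^ (α * p) := by
        rw [Real.mul_rpow hl0.le (Real.rpow_nonneg hx₁ p),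
          Real.mul_rpow hl1'.le (Real.rpow_nonneg hx₂ p),
          ← Real.rpow_mul hx₁, ← Real.rpow_mul hx₂, mul_comm p α]
end

section
/- Let 0 < α ≤ 1 and let a, b > 0 be real numbers with a^(3α) + b^(3α) ≤ 2^α, where the powers are real powers (rpow). Then a + b ≤ 2. -/
theorem stmt_8 (α : ℝ) (hα : 0 < α) (hα1 : α ≤ 1) (a b : ℝ) (ha : 0 < a) (hb : 0 < b)
    (h : a ^ (3 * α) + b ^ (3 * α) ≤ (2:ℝ) ^ α) : a + b ≤ 2 := by
  have ha3 : (0:ℝ) ≤ a ^ (3:ℕ) := by positivity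
  have hb3 : (0:ℝ) ≤ b ^ (3:ℕ) := by positivity
  have hsub : ((a ^ (3:ℕ) + b ^ (3:ℕ)) : ℝ) ^ α ≤ (a ^ (3:ℕ)) ^ α + (b ^ (3:ℕ)) ^ α := by
    have := NNReal.rpow_add_le_add_rpow (a ^ (3:ℕ)).toNNReal (b ^ (3:ℕ)).toNNReal hα.le hα1
    have h' := NNReal.coe_le_coe.2 this
    push_cast [NNReal.coe_rpow, Real.coe_toNNReal _ ha3, Real.coe_toNNReal _ hb3] at h'
    exact h'
  have h1 : (a ^ (3:ℕ) : ℝ) ^ α = a ^ (3 * α) := by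
    rw [← Real.rpow_natCast a 3, ← Real.rpow_mul ha.le]
    norm_num
  have h2 : (b ^ (3:ℕ) : ℝ) ^ α = b ^ (3 * α) := by
    rw [← Real.rpow_natCast b 3, ← Real.rpow_mul hb.le]
    norm_num
  have key : ((a ^ (3:ℕ) + b ^ (3:ℕ)) : ℝ) ^ α ≤ (2:ℝ) ^ α := by
    calc _ ≤ (a ^ (3:ℕ)) ^ α + (b ^ (3:ℕ)) ^ α := hsub
    _ = a ^ (3 * α) + b ^ (3 * α) := by rw [h1, h2]
    _ ≤ (2:ℝ) ^ α := h
  have hle : a ^ (3:ℕ) + b ^ (3:ℕ) ≤ 2 := by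
    by_contra hc
    push_neg at hc
    exact absurd key (not_le.mpr (Real.rpow_lt_rpow (by norm_num) hc hα))
  nlinarith [sq_nonneg (a - b), sq_nonneg (a + b), mul_pos ha hb]
end

section
/- Let 0 < α ≤ 1 and define, for t > 0, E_α(t^α) = Σ_{k=0}^∞ t^(αk) / Γ(1 + kα), where the powers are real powers (rpow) and Γ is the real Gamma function. Then for all real x, y > 0 one has E_α(((x+y)/2)^α) ≤ (E_α(x^α) + E_α(y^α)) / 2^α. -/
/-!
Compare the two series term by term. For `p = α k` the midpoint power `((x + y) / 2) ^ p` is at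
most `(x ^ p + y ^ p) / 2 ^ p` when `p ≤ 1` (subadditivity of `t ↦ t ^ p`) and at most
`(x ^ p + y ^ p) / 2` when `p ≥ 1` (convexity); both denominators are at least `2 ^ α` once
`k ≥ 1`, and the term `k = 0` only needs `2 ^ α ≤ 2`. The series converge because the Euler
integral gives `c ^ s e^{-c} ≤ Γ(s + 1)`, so with `c = 2t` the `k`-th term is at most
`e^{2t} 2^{-αk}`.
-/

open scoped BigOperators

/-- The Mittag-Leffler type value `E_α(t^α) = ∑_{k=0}^∞ t^(αk) / Γ(1 + kα)`. -/
noncomputable def mittagLeffler (α t : ℝ) : ℝ :=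
  ∑' k : ℕ, t ^ (α * (k : ℝ)) / Real.Gamma (1 + (k : ℝ) * α)

open Real MeasureTheory Set

theorem rpow_mul_exp_neg_le_Gamma_add_one {s c : ℝ} (hs : 0 ≤ s) (hc : 0 ≤ c) :
    c ^ s * exp (-c) ≤ Gamma (s + 1) := by
  have hint : IntegrableOn (fun x => exp (-x) * x ^ s) (Ioi 0) := by
    simpa using GammaIntegral_convergent (s := s + 1) (by linarith)
  calc c ^ s * exp (-c) = ∫ x in Ioi c, exp (-x) * c ^ s := by
        rw [integral_mul_const, integral_exp_neg_Ioi, mul_comm]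
    _ ≤ ∫ x in Ioi c, exp (-x) * x ^ s :=
        setIntegral_mono_on ((integrableOn_exp_neg_Ioi c).mul_const _)
          (hint.mono_set (Ioi_subset_Ioi hc)) measurableSet_Ioi fun x hx =>
          mul_le_mul_of_nonneg_left (rpow_le_rpow hc (le_of_lt hx) hs) (exp_pos _).le
    _ ≤ ∫ x in Ioi 0, exp (-x) * x ^ s :=
        setIntegral_mono_set hint
          ((ae_restrict_mem measurableSet_Ioi).mono fun x (hx : 0 < x) => by positivity)
          (Ioi_subset_Ioi hc).eventuallyLE
    _ = Gamma (s + 1) := by rw [Gamma_eq_integral (by linarith), add_sub_cancel_right]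

theorem summable_rpow_mul_div_Gamma {α t : ℝ} (hα : 0 < α) (ht : 0 ≤ t) :
    Summable fun k : ℕ => t ^ (α * k) / Gamma (1 + k * α) := by
  have hr : (1 / 2 : ℝ) ^ α < 1 := rpow_lt_one (by norm_num) (by norm_num) hα
  refine Summable.of_nonneg_of_le (fun k => ?_) (fun k => ?_)
    ((summable_geometric_of_lt_one (by positivity) hr).mul_left (exp (2 * t)))
  · exact div_nonneg (rpow_nonneg ht _) (Gamma_nonneg_of_nonneg (by positivity))
  have hG : 0 < Gamma (1 + k * α) := Gamma_pos_of_pos (by positivity)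
  have hGamma : (2 * t) ^ (α * k) ≤ exp (2 * t) * Gamma (1 + k * α) :=
    calc (2 * t) ^ (α * k) = exp (2 * t) * ((2 * t) ^ (α * k) * exp (-(2 * t))) := by
          rw [mul_left_comm, ← exp_add, add_neg_cancel, exp_zero, mul_one]
      _ ≤ exp (2 * t) * Gamma (α * k + 1) := by
          gcongr; exact rpow_mul_exp_neg_le_Gamma_add_one (by positivity) (by positivity)
      _ = exp (2 * t) * Gamma (1 + k * α) := by ring_nf
  rw [div_le_iff₀ hG]
  calc t ^ (α * k) = ((1 / 2 : ℝ) ^ α) ^ k * (2 * t) ^ (α * k) := by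
        rw [← rpow_natCast, ← rpow_mul (by norm_num), ← mul_rpow (by norm_num) (by positivity),
          ← mul_assoc]
        norm_num
    _ ≤ ((1 / 2 : ℝ) ^ α) ^ k * (exp (2 * t) * Gamma (1 + k * α)) := by gcongr
    _ = exp (2 * t) * ((1 / 2 : ℝ) ^ α) ^ k * Gamma (1 + k * α) := by ring

section MidpointPowers

variable {x y p : ℝ}

theorem rpow_add_div_two_le_of_le_one (hx : 0 ≤ x) (hy : 0 ≤ y) (hp : 0 ≤ p) (hp1 : p ≤ 1) :
    ((x + y) / 2) ^ p ≤ (x ^ p + y ^ p) / 2 ^ p := by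
  rw [div_rpow (by positivity) zero_le_two]
  gcongr
  exact rpow_add_le_add_rpow hx hy hp hp1

theorem rpow_add_div_two_le_of_one_le (hx : 0 ≤ x) (hy : 0 ≤ y) (hp : 1 ≤ p) :
    ((x + y) / 2) ^ p ≤ (x ^ p + y ^ p) / 2 := by
  have half : (0 : ℝ) ≤ 1 / 2 := by norm_num
  calc ((x + y) / 2) ^ p = (1 / 2 * x + 1 / 2 * y) ^ p := by ring_nf
    _ ≤ 1 / 2 * x ^ p + 1 / 2 * y ^ p :=
        (convexOn_rpow hp).2 (mem_Ici.2 hx) (mem_Ici.2 hy) half half (by norm_num)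
    _ = (x ^ p + y ^ p) / 2 := by ring

theorem rpow_mul_natCast_add_div_two_le {α : ℝ} (hα : 0 < α) (hα1 : α ≤ 1) (hx : 0 ≤ x)
    (hy : 0 ≤ y) (k : ℕ) :
    ((x + y) / 2) ^ (α * k) ≤ (x ^ (α * k) + y ^ (α * k)) / 2 ^ α := by
  have h2α : (2 : ℝ) ^ α ≤ 2 := by
    simpa using rpow_le_rpow_of_exponent_le one_le_two hα1
  rcases Nat.eq_zero_or_pos k with rfl | hk
  · rw [le_div_iff₀ (by positivity)]
    norm_num [h2α]
  have hαp : α ≤ α * k := le_mul_of_one_le_right hα.le (Nat.one_le_cast.2 hk)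
  rcases le_total (α * k) 1 with hp1 | hp1
  · calc ((x + y) / 2) ^ (α * k) ≤ (x ^ (α * k) + y ^ (α * k)) / 2 ^ (α * k) :=
          rpow_add_div_two_le_of_le_one hx hy (by positivity) hp1
      _ ≤ _ := by gcongr; exact one_le_two
  · calc ((x + y) / 2) ^ (α * k) ≤ (x ^ (α * k) + y ^ (α * k)) / 2 :=
          rpow_add_div_two_le_of_one_le hx hy hp1
      _ ≤ _ := by gcongr

end MidpointPowers

theorem stmt_9 (α : ℝ) (hα : 0 < α) (hα1 : α ≤ 1) (x y : ℝ) (hx : 0 < x) (hy : 0 < y) :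
    mittagLeffler α ((x + y) / 2) ≤ (mittagLeffler α x + mittagLeffler α y) / (2:ℝ) ^ α := by
  have hsx := summable_rpow_mul_div_Gamma hα hx.le
  have hsy := summable_rpow_mul_div_Gamma hα hy.le
  unfold mittagLeffler
  rw [← hsx.tsum_add hsy, ← tsum_div_const]
  refine (summable_rpow_mul_div_Gamma hα (by positivity)).tsum_le_tsum (fun k => ?_)
    ((hsx.add hsy).div_const _)
  calc ((x + y) / 2) ^ (α * k) / Gamma (1 + k * α)
      ≤ (x ^ (α * k) + y ^ (α * k)) / 2 ^ α / Gamma (1 + k * α) := by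
        gcongr
        exact rpow_mul_natCast_add_div_two_le hα hα1 hx.le hy.le k
    _ = _ := by ring
end

section
/- Let 0 < α ≤ 1 and let a, b, c, d > 0 be real numbers satisfying c^(2α) + d^(2α) = (a^(2α) + b^(2α))^3, where the powers are real powers (rpow). Then a^(3α)/c^α + b^(3α)/d^α ≥ 1. -/
lemma key13 (x y u v : ℝ) (hx : 0 < x) (hy : 0 < y) (hu : 0 < u) (hv : 0 < v)
    (h : u ^ 2 + v ^ 2 = (x ^ 2 + y ^ 2) ^ 3) : x ^ 3 / u + y ^ 3 / v ≥ 1 := by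
  have hS : x * u + y * v ≤ (x ^ 2 + y ^ 2) ^ 2 := by
    nlinarith [sq_nonneg (x * v - y * u), mul_pos hx hu, mul_pos hy hv,
      sq_nonneg (x ^ 2 + y ^ 2), mul_pos (mul_pos hx hu) (mul_pos hy hv)]
  have hkey : x ^ 3 * v + y ^ 3 * u ≥ u * v := by
    nlinarith [mul_nonneg (mul_nonneg hx.le hy.le) (sq_nonneg (x * v - y * u)),
      mul_pos hu hv, mul_pos (mul_pos hx hu) (mul_pos hy hv), hS,
      mul_le_mul_of_nonneg_right hS (mul_pos hu hv).le,
      mul_pos hx hu, mul_pos hy hv]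
  rw [ge_iff_le, div_add_div _ _ hu.ne' hv.ne', le_div_iff₀ (mul_pos hu hv)]
  linarith

theorem stmt_13 (α : ℝ) (hα : 0 < α) (hα1 : α ≤ 1) (a b c d : ℝ)
    (ha : 0 < a) (hb : 0 < b) (hc : 0 < c) (hd : 0 < d)
    (h : c ^ (2 * α) + d ^ (2 * α) = (a ^ (2 * α) + b ^ (2 * α)) ^ (3 : ℝ)) :
    a ^ (3 * α) / c ^ α + b ^ (3 * α) / d ^ α ≥ 1 := by
  have e2 : ∀ t : ℝ, 0 < t → t ^ (2 * α) = (t ^ α) ^ 2 := by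
    intro t ht
    rw [mul_comm, Real.rpow_mul ht.le, Real.rpow_two]
  have e3 : ∀ t : ℝ, 0 < t → t ^ (3 * α) = (t ^ α) ^ 3 := by
    intro t ht
    rw [mul_comm, Real.rpow_mul ht.le]
    exact_mod_cast Real.rpow_natCast _ 3
  have hsum : (0:ℝ) ≤ a ^ (2 * α) + b ^ (2 * α) := by positivity
  rw [e2 a ha, e2 b hb, e2 c hc, e2 d hd,
    show ((a ^ α) ^ 2 + (b ^ α) ^ 2) ^ (3:ℝ) = ((a ^ α) ^ 2 + (b ^ α) ^ 2) ^ (3:ℕ) by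
      exact_mod_cast Real.rpow_natCast _ 3] at h
  rw [e3 a ha, e3 b hb]
  exact key13 _ _ _ _ (Real.rpow_pos_of_pos ha α) (Real.rpow_pos_of_pos hb α)
    (Real.rpow_pos_of_pos hc α) (Real.rpow_pos_of_pos hd α) h
end
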